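/- arXiv:2405.12828 — 6 statements merged into one kernel-verified Lean document; each statement's English description precedes it below -/
import Mathlib

section
/- Let λ₁ ≤ λ₂ ≤ ... ≤ λₙ be real numbers and w₁, ..., wₙ be nonnegative real numbers with M = max{w₁,...,wₙ} > 0. Let S = Σᵢ wᵢ and k = ⌊S/M⌋. Then Σᵢ₌₁ⁿ λᵢwᵢ ≥ (S/k) · Σᵢ₌₁ᵏ λᵢ. -/
/-!
Spread the mass `S` evenly over the first `k` indices: `vᵢ = S/k` for `i ≤ k`, else `0`.
Since `S/k ≥ M ≥ wᵢ`, the vector `v - w` is nonnegative up to `k` and nonpositive after it,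
so against the pivot `t = λₖ` every term `(λᵢ - t)(wᵢ - vᵢ)` is nonnegative. As `v` and `w` have
the same total, these terms add up to `∑ λᵢ wᵢ - ∑ λᵢ vᵢ`.
-/

open Finset

theorem Finset.sum_mul_le_sum_mul_of_threshold {ι : Type*} (s : Finset ι) (p : ι → Prop)
    (l v w : ι → ℝ) (t : ℝ) (hsum : ∑ i ∈ s, v i = ∑ i ∈ s, w i)
    (hlow : ∀ i ∈ s, p i → l i ≤ t ∧ w i ≤ v i)
    (hhigh : ∀ i ∈ s, ¬ p i → t ≤ l i ∧ v i ≤ w i) :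
    ∑ i ∈ s, l i * v i ≤ ∑ i ∈ s, l i * w i := by
  have hterm : ∀ i ∈ s, 0 ≤ (l i - t) * (w i - v i) := by
    intro i hi
    by_cases hp : p i
    · obtain ⟨hl, hw⟩ := hlow i hi hp
      exact mul_nonneg_of_nonpos_of_nonpos (by linarith) (by linarith)
    · obtain ⟨hl, hw⟩ := hhigh i hi hp
      exact mul_nonneg (by linarith) (by linarith)
  have hdiff : ∑ i ∈ s, l i * w i - ∑ i ∈ s, l i * v i = ∑ i ∈ s, (l i - t) * (w i - v i) := by
    simp only [sub_mul, mul_sub, sum_sub_distrib, ← mul_sum, hsum]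
    ring
  linarith [sum_nonneg hterm]

theorem one_le_natFloor_div {S M : ℝ} (hM : 0 < M) (hMS : M ≤ S) : 1 ≤ ⌊S / M⌋₊ :=
  Nat.le_floor (by rwa [Nat.cast_one, le_div_iff₀ hM, one_mul])

theorem le_div_natFloor_div {S M : ℝ} (hM : 0 < M) (hMS : M ≤ S) : M ≤ S / ⌊S / M⌋₊ := by
  have hk : (0 : ℝ) < ⌊S / M⌋₊ := by exact_mod_cast one_le_natFloor_div hM hMS
  rw [le_div_iff₀ hk, mul_comm, ← le_div_iff₀ hM]
  exact Nat.floor_le (div_nonneg (hM.le.trans hMS) hM.le)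

/-- If `λ₁ ≤ ⋯ ≤ λₙ` are reals, `w₁, …, wₙ ≥ 0` with maximum `M > 0`,
`S = ∑ wᵢ` and `k = ⌊S/M⌋`, then `∑ λᵢ wᵢ ≥ (S/k) ∑_{i=1}^{k} λᵢ`. -/
theorem statement0 (n : ℕ) (l w : Fin n → ℝ) (hl : Monotone l)
    (hw : ∀ i, 0 ≤ w i) (M : ℝ) (hub : ∀ i, w i ≤ M) (hmem : ∃ i, w i = M)
    (hpos : 0 < M) :
    (∑ i, l i * w i) ≥
      ((∑ i, w i) / (⌊(∑ i, w i) / M⌋₊ : ℝ)) *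
        ∑ i ∈ Finset.univ.filter (fun i : Fin n => (i : ℕ) < ⌊(∑ j, w j) / M⌋₊), l i := by
  obtain ⟨i₀, hi₀⟩ := hmem
  set S := ∑ i, w i
  set k := ⌊S / M⌋₊
  have hMS : M ≤ S := hi₀ ▸ single_le_sum (fun i _ => hw i) (mem_univ i₀)
  have hk1 : 1 ≤ k := one_le_natFloor_div hpos hMS
  have hkn : k ≤ n := by
    refine Nat.floor_le_of_le ((div_le_iff₀ hpos).2 ?_)
    simpa using sum_le_sum fun i (_ : i ∈ univ) => hub i
  have hMc : M ≤ S / k := le_div_natFloor_div hpos hMS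
  set v : Fin n → ℝ := fun i => if (i : ℕ) < k then S / k else 0
  have hv : ∀ u : Fin n → ℝ,
      ∑ i, u i * v i = (∑ i ∈ univ.filter (fun i : Fin n => (i : ℕ) < k), u i) * (S / k) := by
    intro u
    simp only [v, mul_ite, mul_zero, ← sum_filter, sum_mul]
  have hvsum : ∑ i, v i = S := by
    have hk0 : (k : ℝ) ≠ 0 := Nat.cast_ne_zero.2 (by omega)
    simpa [Fin.card_filter_val_lt, hkn, mul_div_cancel₀ _ hk0] using hv 1
  rw [ge_iff_le, mul_comm, ← hv]
  refine sum_mul_le_sum_mul_of_threshold univ (fun i : Fin n => (i : ℕ) < k) l v w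
    (l ⟨k - 1, by omega⟩) (by rw [hvsum]) (fun i _ hi => ⟨hl ?_, ?_⟩) (fun i _ hi => ⟨hl ?_, ?_⟩)
  · exact Fin.mk_le_mk.2 (by omega)
  · simpa [v, hi] using (hub i).trans hMc
  · exact Fin.mk_le_mk.2 (by omega)
  · simpa [v, hi] using hw i
end

section
/- Let λ₁ ≤ λ₂ ≤ ... ≤ λₙ be real numbers and w₁, ..., wₙ be nonnegative real numbers with M = max{w₁,...,wₙ} > 0, S = Σᵢ wᵢ, and k = ⌊S/M⌋. If Σᵢ₌₁ᵏ λᵢ > 0 then Σᵢ₌₁ⁿ λᵢwᵢ > 0, and if Σᵢ₌₁ᵏ λᵢ ≥ 0 then Σᵢ₌₁ⁿ λᵢwᵢ ≥ 0. -/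
/-!
Let `s` be the first `k` indices and `c` the largest `λᵢ` with `i ∈ s`. Since `λ` is sorted,
`(λᵢ - c) (wᵢ - M·[i ∈ s]) ≥ 0` for every `i`, and summing gives
`∑ λᵢ wᵢ ≥ M ∑_{i ∈ s} λᵢ + c (S - k M)`. Here `S - k M ≥ 0` by the choice of `k`, and
`c ≥ 0` as soon as `∑_{i ∈ s} λᵢ ≥ 0`, so `∑ λᵢ wᵢ ≥ M ∑_{i ∈ s} λᵢ`.
-/

open Finset

theorem mul_sum_add_mul_le_sum_mul {ι : Type*} [Fintype ι] [DecidableEq ι] {l w : ι → ℝ}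
    {M c : ℝ} {s : Finset ι} (hw : ∀ i, 0 ≤ w i) (hub : ∀ i, w i ≤ M)
    (hle : ∀ i ∈ s, l i ≤ c) (hge : ∀ i ∉ s, c ≤ l i) :
    M * ∑ i ∈ s, l i + c * (∑ i, w i - #s * M) ≤ ∑ i, l i * w i := by
  have h_in : ∀ i ∈ s, M * l i + c * (w i - M) ≤ l i * w i := fun i hi => by
    nlinarith [mul_nonneg (sub_nonneg.2 (hle i hi)) (sub_nonneg.2 (hub i))]
  have h_out : ∀ i ∈ sᶜ, c * w i ≤ l i * w i := fun i hi =>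
    mul_le_mul_of_nonneg_right (hge i (mem_compl.1 hi)) (hw i)
  calc M * ∑ i ∈ s, l i + c * (∑ i, w i - #s * M)
      = ∑ i ∈ s, (M * l i + c * (w i - M)) + ∑ i ∈ sᶜ, c * w i := by
        rw [← sum_add_sum_compl s w, sum_add_distrib, ← mul_sum, ← mul_sum, ← mul_sum,
          sum_sub_distrib, sum_const, nsmul_eq_mul]
        ring
    _ ≤ ∑ i ∈ s, l i * w i + ∑ i ∈ sᶜ, l i * w i :=
        add_le_add (sum_le_sum h_in) (sum_le_sum h_out)
    _ = ∑ i, l i * w i := sum_add_sum_compl s _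

theorem mul_sum_le_sum_mul_of_isLowerSet {ι : Type*} [Fintype ι] [LinearOrder ι] {l w : ι → ℝ}
    {M : ℝ} {s : Finset ι} (hl : Monotone l) (hw : ∀ i, 0 ≤ w i) (hub : ∀ i, w i ≤ M)
    (hs : IsLowerSet (s : Set ι)) (hne : s.Nonempty) (hcard : #s * M ≤ ∑ i, w i)
    (hsum : 0 ≤ ∑ i ∈ s, l i) :
    M * ∑ i ∈ s, l i ≤ ∑ i, l i * w i := by
  set c := s.sup' hne l
  obtain ⟨j, hj, hcj⟩ := exists_mem_eq_sup' hne l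
  have hge : ∀ i ∉ s, c ≤ l i := fun i hi =>
    hcj.le.trans (hl (le_of_lt (not_le.1 fun hij => hi (hs hij hj))))
  have hc : 0 ≤ c := by
    obtain ⟨i, hi, hli⟩ :=
      exists_le_of_sum_le (f := fun _ => (0 : ℝ)) (g := l) hne (by simpa using hsum)
    exact hli.trans (le_sup' l hi)
  calc M * ∑ i ∈ s, l i
      ≤ M * ∑ i ∈ s, l i + c * (∑ i, w i - #s * M) := by
        nlinarith [mul_nonneg hc (sub_nonneg.2 hcard)]
    _ ≤ ∑ i, l i * w i :=
        mul_sum_add_mul_le_sum_mul hw hub (fun i hi => le_sup' l hi) hge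

/-- With `λ₁ ≤ ⋯ ≤ λₙ`, nonnegative weights `w` with maximum `M > 0`,
`S = ∑ wᵢ`, `k = ⌊S/M⌋`: if `∑_{i=1}^{k} λᵢ > 0` then `∑ λᵢwᵢ > 0`, and if
`∑_{i=1}^{k} λᵢ ≥ 0` then `∑ λᵢwᵢ ≥ 0`. -/
theorem statement1 (n : ℕ) (l w : Fin n → ℝ) (hl : Monotone l)
    (hw : ∀ i, 0 ≤ w i) (M : ℝ) (hub : ∀ i, w i ≤ M) (hmem : ∃ i, w i = M)
    (hpos : 0 < M) :
    (0 < (∑ i ∈ Finset.univ.filter (fun i : Fin n => (i : ℕ) < ⌊(∑ j, w j) / M⌋₊), l i) →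
        0 < ∑ i, l i * w i) ∧
    (0 ≤ (∑ i ∈ Finset.univ.filter (fun i : Fin n => (i : ℕ) < ⌊(∑ j, w j) / M⌋₊), l i) →
        0 ≤ ∑ i, l i * w i) := by
  obtain ⟨i₀, hi₀⟩ := hmem
  set k := ⌊(∑ j, w j) / M⌋₊
  set s := univ.filter fun i : Fin n => (i : ℕ) < k
  have hMS : M ≤ ∑ j, w j := hi₀ ▸ single_le_sum (fun i _ => hw i) (mem_univ i₀)
  have hk : 0 < k := Nat.floor_pos.2 ((one_le_div hpos).2 hMS)
  have hkM : k * M ≤ ∑ j, w j :=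
    (le_div_iff₀ hpos).1 (Nat.floor_le (div_nonneg (hpos.le.trans hMS) hpos.le))
  have hcard : (#s : ℝ) * M ≤ ∑ j, w j := by
    refine le_trans (mul_le_mul_of_nonneg_right ?_ hpos.le) hkM
    exact_mod_cast Fin.card_filter_val_lt.trans_le (min_le_right n k)
  have hs : IsLowerSet (s : Set (Fin n)) := fun a b hba ha => by simp_all [s]; omega
  have hne : s.Nonempty := ⟨⟨0, i₀.pos⟩, by simpa [s] using hk⟩
  have key := fun hsum => mul_sum_le_sum_mul_of_isLowerSet hl hw hub hs hne hcard hsum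
  exact ⟨fun h => (mul_pos hpos h).trans_le (key h.le),
    fun h => (mul_nonneg hpos.le h).trans (key h)⟩
end

section
/- For double forms ω₁, ω₂, ω₃ on a Euclidean space, the composition product satisfies the adjointness relations ⟨ω₁∘ω₂, ω₃⟩ = ⟨ω₂, ω₁ᵗ∘ω₃⟩ = ⟨ω₁, ω₃∘ω₂ᵗ⟩, where ωᵗ denotes the transpose of a double form. -/
noncomputable section

open Finset
open scoped RealInnerProductSpace

/-- Euclidean `n`-space. -/
abbrev Evec (n : ℕ) := EuclideanSpace ℝ (Fin n)

/-- The space of `(p,q)` double forms, modeled as real-valued kernels on pairs of tuples. -/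
abbrev DF (n p q : ℕ) := (Fin p → Evec n) → (Fin q → Evec n) → ℝ

/-- `p`-forms. -/
abbrev Form (n p : ℕ) := (Fin p → Evec n) → ℝ

/-- Mixed-degree forms (elements of the full exterior algebra). -/
abbrev MixedForm (n : ℕ) := ∀ p, Form n p

/-- Mixed-bidegree double forms. -/
abbrev MixedDF (n : ℕ) := ∀ p q, DF n p q

/-- The standard orthonormal basis. -/
def ebasis (n : ℕ) (i : Fin n) : Evec n := EuclideanSpace.single i 1

/-- The metric as a `(1,1)` double form. -/
def gdf (n : ℕ) : DF n 1 1 := fun x y => ⟪x 0, y 0⟫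

/-- Alternating multilinear predicate for a `p`-form kernel. -/
def IsAltML {n m : ℕ} (f : Form n m) : Prop :=
  (∀ (x : Fin m → Evec n) (i : Fin m) (c : ℝ) (a b : Evec n),
      f (Function.update x i (c • a + b)) =
        c * f (Function.update x i a) + f (Function.update x i b)) ∧
  (∀ (x : Fin m → Evec n) (i j : Fin m), i ≠ j → x i = x j → f x = 0)

/-- A kernel is a genuine double form iff it is alternating multilinear in both blocks. -/
def IsDF {n p q : ℕ} (ω : DF n p q) : Prop :=
  (∀ y, IsAltML (n := n) fun x => ω x y) ∧ (∀ x, IsAltML (ω x))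

/-- Bilinearity of a function of two vectors. -/
def IsBilin {n : ℕ} (h : Evec n → Evec n → ℝ) : Prop :=
  (∀ y, IsLinearMap ℝ fun x => h x y) ∧ (∀ x, IsLinearMap ℝ (h x))

/-- A 2-form: an alternating bilinear function. -/
def IsAltBilin {n : ℕ} (h : Evec n → Evec n → ℝ) : Prop :=
  IsBilin h ∧ ∀ x, h x x = 0

/-- Exterior product of double forms. -/
def wedge {n p q r s : ℕ} (ω : DF n p q) (η : DF n r s) : DF n (p + r) (q + s) :=
  fun x y =>
    (((p.factorial * r.factorial * q.factorial * s.factorial : ℕ) : ℝ))⁻¹ *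
      ∑ σ : Equiv.Perm (Fin (p + r)), ∑ τ : Equiv.Perm (Fin (q + s)),
        ((Equiv.Perm.sign σ : ℤ) : ℝ) * ((Equiv.Perm.sign τ : ℤ) : ℝ) *
          ω (fun i => x (σ (Fin.castAdd r i))) (fun j => y (τ (Fin.castAdd s j))) *
          η (fun i => x (σ (Fin.natAdd p i))) (fun j => y (τ (Fin.natAdd q j)))

/-- Exterior powers of the metric: `gᵖ`. -/
def gpow (n : ℕ) : (p : ℕ) → DF n p p
  | 0 => fun _ _ => 1
  | p + 1 => wedge (gpow n p) (gdf n)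

/-- The natural inner product of `(p,q)` double forms. -/
def innerDF {n p q : ℕ} (ω η : DF n p q) : ℝ :=
  (((p.factorial * q.factorial : ℕ) : ℝ))⁻¹ *
    ∑ f : Fin p → Fin n, ∑ h : Fin q → Fin n,
      ω (fun i => ebasis n (f i)) (fun j => ebasis n (h j)) *
        η (fun i => ebasis n (f i)) (fun j => ebasis n (h j))

/-- Composition product of double forms: `comp ω₁ ω₂ = ω₁ ∘ ω₂`. -/
def comp {n p q r : ℕ} (ω₁ : DF n p q) (ω₂ : DF n r p) : DF n r q :=
  fun x y =>
    ((p.factorial : ℝ))⁻¹ *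
      ∑ f : Fin p → Fin n,
        ω₂ x (fun i => ebasis n (f i)) * ω₁ (fun i => ebasis n (f i)) y

/-- Transpose of a double form. -/
def transp {n p q : ℕ} (ω : DF n p q) : DF n q p := fun x y => ω y x

/-- Inclusion of bilinear forms as `(1,1)` double forms (the map `ρ`). -/
def rho {n : ℕ} (h : Evec n → Evec n → ℝ) : DF n 1 1 := fun x y => h (x 0) (y 0)

/-- Inner product of 2-forms. -/
def inner2 {n : ℕ} (α β : Evec n → Evec n → ℝ) : ℝ :=
  (2:ℝ)⁻¹ * ∑ i, ∑ j, α (ebasis n i) (ebasis n j) * β (ebasis n i) (ebasis n j)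

/-- The curvature operator of a `(2,2)` double form, acting on 2-forms. -/
def curvOp {n : ℕ} (R : DF n 2 2) (θ : Evec n → Evec n → ℝ) : Evec n → Evec n → ℝ :=
  fun x y => (2:ℝ)⁻¹ * ∑ i, ∑ j,
    θ (ebasis n i) (ebasis n j) * R ![ebasis n i, ebasis n j] ![x, y]

/-- The first Bianchi identity for a `(2,2)` double form. -/
def FirstBianchi {n : ℕ} (R : DF n 2 2) : Prop :=
  ∀ x y z t : Evec n, R ![x, y] ![z, t] + R ![y, z] ![x, t] + R ![z, x] ![y, t] = 0

/-- The Ricci contraction `c R` of a `(2,2)` double form. -/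
def ricci {n : ℕ} (R : DF n 2 2) : DF n 1 1 :=
  fun x y => ∑ i, R ![ebasis n i, x 0] ![ebasis n i, y 0]

/-- Contraction of double forms. -/
def contr {n p q : ℕ} (ω : DF n (p + 1) (q + 1)) : DF n p q :=
  fun x y => ∑ i, ω (Fin.cons (ebasis n i) x) (Fin.cons (ebasis n i) y)

/-- Iterated contraction `cʳ`. -/
def contrIter {n : ℕ} : (r : ℕ) → {p q : ℕ} → DF n (p + r) (q + r) → DF n p q
  | 0, _, _, ω => ω
  | r + 1, _, _, ω => contrIter r (contr ω)

/-- The `(1,1)` double form associated to an endomorphism. -/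
def hdf {n : ℕ} (h : Evec n →ₗ[ℝ] Evec n) : DF n 1 1 := fun x y => ⟪h (x 0), y 0⟫

/-- Left exterior multiplication of a form by a covector `f`. -/
def wedgeC {n p : ℕ} (f : Evec n → ℝ) (α : Form n p) : Form n (p + 1) :=
  fun x => ∑ i : Fin (p + 1), (-1 : ℝ) ^ (i : ℕ) * f (x i) * α (x ∘ i.succAbove)

/-- Interior product of a form by a vector. -/
def iotaV {n : ℕ} : {p : ℕ} → Evec n → Form n p → Form n (p - 1)
  | 0, _, _ => 0
  | _ + 1, v, α => fun x => α (Fin.cons v x)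


/-- Interior product (non-truncating version). -/
def iotaV' {n p : ℕ} (v : Evec n) (α : Form n (p + 1)) : Form n p :=
  fun x => α (Fin.cons v x)

/-- Interior product in the first block (non-truncating version). -/
def iotaL' {n p q : ℕ} (v : Evec n) (ω : DF n (p + 1) q) : DF n p q :=
  fun x y => ω (Fin.cons v x) y

/-- Interior product in the second block (non-truncating version). -/
def iotaR' {n p q : ℕ} (v : Evec n) (ω : DF n p (q + 1)) : DF n p q :=
  fun x y => ω x (Fin.cons v y)

/-- Embedding a homogeneous form into mixed forms. -/
def embF {n : ℕ} (p : ℕ) (α : Form n p) : MixedForm n :=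
  fun d => if h : d = p then cast (show Form n p = Form n d by rw [h]) α else 0

/-- Left Clifford multiplication `v · α` of a homogeneous form. -/
def cliffLone {n p : ℕ} (v : Evec n) (α : Form n p) : MixedForm n :=
  embF (p + 1) (wedgeC (fun u => ⟪v, u⟫) α) - embF (p - 1) (iotaV v α)

/-- Right Clifford multiplication `α · v` of a homogeneous form. -/
def cliffRone {n p : ℕ} (v : Evec n) (α : Form n p) : MixedForm n :=
  (-1 : ℝ) ^ p • (embF (p + 1) (wedgeC (fun u => ⟪v, u⟫) α) + embF (p - 1) (iotaV v α))

/-- Left Clifford multiplication by a vector on mixed forms. -/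
def cliffLv {n : ℕ} (v : Evec n) (ω : MixedForm n) : MixedForm n :=
  fun d => match d with
  | 0 => -(iotaV' v (ω 1))
  | d + 1 => wedgeC (fun u => ⟪v, u⟫) (ω d) - iotaV' v (ω (d + 1 + 1))

/-- Right Clifford multiplication by a vector on mixed forms. -/
def cliffRv {n : ℕ} (v : Evec n) (ω : MixedForm n) : MixedForm n :=
  fun d => match d with
  | 0 => -(iotaV' v (ω 1))
  | d + 1 => (-1 : ℝ) ^ d • (wedgeC (fun u => ⟪v, u⟫) (ω d) + iotaV' v (ω (d + 1 + 1)))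

/-- Left Clifford multiplication by a 2-form on mixed forms. -/
def cliffL2 {n : ℕ} (α : Evec n → Evec n → ℝ) (ω : MixedForm n) : MixedForm n :=
  (2:ℝ)⁻¹ • ∑ i, ∑ j, α (ebasis n i) (ebasis n j) • cliffLv (ebasis n i) (cliffLv (ebasis n j) ω)

/-- Right Clifford multiplication by a 2-form on mixed forms. -/
def cliffR2 {n : ℕ} (α : Evec n → Evec n → ℝ) (ω : MixedForm n) : MixedForm n :=
  (2:ℝ)⁻¹ • ∑ i, ∑ j, α (ebasis n i) (ebasis n j) • cliffRv (ebasis n j) (cliffRv (ebasis n i) ω)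

/-- Interior product by a vector in the first block of a double form. -/
def iotaL {n : ℕ} : {p q : ℕ} → Evec n → DF n p q → DF n (p - 1) q
  | 0, _, _, _ => 0
  | _ + 1, _, v, ω => fun x y => ω (Fin.cons v x) y

/-- Interior product by a vector in the second block of a double form. -/
def iotaR {n : ℕ} : {p q : ℕ} → Evec n → DF n p q → DF n p (q - 1)
  | _, 0, _, _ => 0
  | _, _ + 1, v, ω => fun x y => ω x (Fin.cons v y)

/-- Exterior multiplication by a covector in the first block. -/
def wedgeCL {n p q : ℕ} (f : Evec n → ℝ) (ω : DF n p q) : DF n (p + 1) q :=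
  fun x y => ∑ i : Fin (p + 1), (-1 : ℝ) ^ (i : ℕ) * f (x i) * ω (x ∘ i.succAbove) y

/-- Exterior multiplication by a covector in the second block. -/
def wedgeCR {n p q : ℕ} (f : Evec n → ℝ) (ω : DF n p q) : DF n p (q + 1) :=
  fun x y => ∑ j : Fin (q + 1), (-1 : ℝ) ^ (j : ℕ) * f (y j) * ω x (y ∘ j.succAbove)

/-- Left Clifford multiplication by a vector on the first factor of mixed double forms. -/
def cliffLvL {n : ℕ} (v : Evec n) (Ω : MixedDF n) : MixedDF n :=
  fun p q => match p with
  | 0 => -(iotaL' v (Ω 1 q))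
  | p + 1 => wedgeCL (fun u => ⟪v, u⟫) (Ω p q) - iotaL' v (Ω (p + 1 + 1) q)

/-- Right Clifford multiplication by a vector on the first factor of mixed double forms. -/
def cliffRvL {n : ℕ} (v : Evec n) (Ω : MixedDF n) : MixedDF n :=
  fun p q => match p with
  | 0 => -(iotaL' v (Ω 1 q))
  | p + 1 => (-1 : ℝ) ^ p • (wedgeCL (fun u => ⟪v, u⟫) (Ω p q) + iotaL' v (Ω (p + 1 + 1) q))

/-- Left Clifford multiplication by a vector on the second factor of mixed double forms. -/
def cliffLvR {n : ℕ} (v : Evec n) (Ω : MixedDF n) : MixedDF n :=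
  fun p q => match q with
  | 0 => -(iotaR' v (Ω p 1))
  | q + 1 => wedgeCR (fun u => ⟪v, u⟫) (Ω p q) - iotaR' v (Ω p (q + 1 + 1))

/-- Right Clifford multiplication by a vector on the second factor of mixed double forms. -/
def cliffRvR {n : ℕ} (v : Evec n) (Ω : MixedDF n) : MixedDF n :=
  fun p q => match q with
  | 0 => -(iotaR' v (Ω p 1))
  | q + 1 => (-1 : ℝ) ^ q • (wedgeCR (fun u => ⟪v, u⟫) (Ω p q) + iotaR' v (Ω p (q + 1 + 1)))

/-- Clifford commutator with a covector (1-form) on the first factor. -/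
def adLone {n : ℕ} (v : Evec n) (Ω : MixedDF n) : MixedDF n :=
  cliffLvL v Ω - cliffRvL v Ω

/-- Clifford commutator with a covector (1-form) on the second factor. -/
def adRone {n : ℕ} (v : Evec n) (Ω : MixedDF n) : MixedDF n :=
  cliffLvR v Ω - cliffRvR v Ω

/-- The sharp product of a `(1,1)` double form with a mixed double form. -/
def sharp11 {n : ℕ} (h : Evec n → Evec n → ℝ) (Ω : MixedDF n) : MixedDF n :=
  ∑ i, ∑ j, h (ebasis n i) (ebasis n j) • adLone (ebasis n i) (adRone (ebasis n j) Ω)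

/-- Clifford commutator with the 2-form `v ∧ w` (for orthonormal `v, w`) on the first factor. -/
def adLpair {n : ℕ} (v w : Evec n) (Ω : MixedDF n) : MixedDF n :=
  cliffLvL v (cliffLvL w Ω) - cliffRvL w (cliffRvL v Ω)

/-- Clifford commutator with the 2-form `v ∧ w` (for orthonormal `v, w`) on the second factor. -/
def adRpair {n : ℕ} (v w : Evec n) (Ω : MixedDF n) : MixedDF n :=
  cliffLvR v (cliffLvR w Ω) - cliffRvR w (cliffRvR v Ω)

/-- Clifford commutator with a 2-form on the first factor. -/
def adL2 {n : ℕ} (α : Evec n → Evec n → ℝ) (Ω : MixedDF n) : MixedDF n :=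
  (2:ℝ)⁻¹ • ∑ i, ∑ j, α (ebasis n i) (ebasis n j) • adLpair (ebasis n i) (ebasis n j) Ω

/-- Clifford commutator with a 2-form on the second factor. -/
def adR2 {n : ℕ} (α : Evec n → Evec n → ℝ) (Ω : MixedDF n) : MixedDF n :=
  (2:ℝ)⁻¹ • ∑ i, ∑ j, α (ebasis n i) (ebasis n j) • adRpair (ebasis n i) (ebasis n j) Ω

/-- The sharp product of a `(2,2)` double form with a mixed double form. -/
def sharpR {n : ℕ} (R : DF n 2 2) (Ω : MixedDF n) : MixedDF n :=
  (4:ℝ)⁻¹ • ∑ i, ∑ j, ∑ k, ∑ l,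
    R ![ebasis n i, ebasis n j] ![ebasis n k, ebasis n l] •
      adLpair (ebasis n i) (ebasis n j) (adRpair (ebasis n k) (ebasis n l) Ω)

/-- Embedding of a homogeneous double form into mixed double forms. -/
def embDF {n : ℕ} (p q : ℕ) (ω : DF n p q) : MixedDF n :=
  fun p' q' =>
    if h : p' = p ∧ q' = q then cast (show DF n p q = DF n p' q' by rw [h.1, h.2]) ω else 0

/-- Interior product of a double form by a `(1,1)` double form. -/
def iotaH {n : ℕ} : {p q : ℕ} → (Evec n → Evec n → ℝ) → DF n p q → DF n (p - 1) (q - 1)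
  | 0, _, _, _ => 0
  | _ + 1, 0, _, _ => 0
  | _ + 1, _ + 1, h, ω => fun x y =>
      ∑ i, ∑ j, h (ebasis n i) (ebasis n j) *
        ω (Fin.cons (ebasis n i) x) (Fin.cons (ebasis n j) y)

/-- Contraction of a double form, defined in every bidegree. -/
def contrAny {n : ℕ} : {p q : ℕ} → DF n p q → DF n (p - 1) (q - 1)
  | 0, _, _ => 0
  | _ + 1, 0, _ => 0
  | _ + 1, _ + 1, ω => fun x y =>
      ∑ i, ω (Fin.cons (ebasis n i) x) (Fin.cons (ebasis n i) y)

/-- The first Bianchi sum `𝔖`. -/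
def bianchiT {n : ℕ} : {p q : ℕ} → DF n p q → DF n (p + 1) (q - 1)
  | _, 0, _ => 0
  | p, _ + 1, ω => fun x y =>
      ∑ i, ∑ a : Fin (p + 1), (-1 : ℝ) ^ (a : ℕ) * ⟪ebasis n i, x a⟫ *
        ω (x ∘ a.succAbove) (Fin.cons (ebasis n i) y)

/-- The adjoint first Bianchi sum `𝔖̃`. -/
def bianchiAdjT {n : ℕ} : {p q : ℕ} → DF n p q → DF n (p - 1) (q + 1)
  | 0, _, _ => 0
  | _ + 1, q, ω => fun x y =>
      ∑ i, ∑ b : Fin (q + 1), (-1 : ℝ) ^ (b : ℕ) * ⟪ebasis n i, y b⟫ *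
        ω (Fin.cons (ebasis n i) x) (y ∘ b.succAbove)

/-- `g^{q-1} ρ(α) / (q-1)!`, the derivation extension of a `(1,1)` double form, with the
convention that it vanishes for `q = 0` (i.e. `g⁻¹ = 0`). -/
def gPowRho {n : ℕ} : (q : ℕ) → (Evec n → Evec n → ℝ) → DF n q q
  | 0, _ => 0
  | q + 1, α => ((q.factorial : ℝ))⁻¹ • wedge (gpow n q) (rho α)

/-- A 2-form is expressible in terms of `m` covectors. -/
def ExprBy {n : ℕ} (E : Evec n → Evec n → ℝ) (m : ℕ) : Prop :=
  ∃ (w : Fin m → Evec n) (c : Fin m → Fin m → ℝ), ∀ x y,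
    E x y = ∑ a, ∑ b, c a b * (⟪w a, x⟫ * ⟪w b, y⟫ - ⟪w a, y⟫ * ⟪w b, x⟫)

theorem innerDF_comm {n p q : ℕ} (ω η : DF n p q) : innerDF ω η = innerDF η ω := by
  simp only [innerDF, mul_comm (ω _ _)]

/-- Each of the three inner products in `statement4` expands to this triple sum, up to the
order of summation. -/
def compPairing {n p q r : ℕ} (ω₁ : DF n p q) (ω₂ : DF n r p) (ω₃ : DF n r q) : ℝ :=
  ((p.factorial * q.factorial * r.factorial : ℕ) : ℝ)⁻¹ *
    ∑ f : Fin r → Fin n, ∑ g : Fin p → Fin n, ∑ h : Fin q → Fin n,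
      ω₂ (fun i => ebasis n (f i)) (fun i => ebasis n (g i)) *
        ω₁ (fun i => ebasis n (g i)) (fun i => ebasis n (h i)) *
          ω₃ (fun i => ebasis n (f i)) (fun i => ebasis n (h i))

theorem innerDF_comp {n p q r : ℕ} (ω₁ : DF n p q) (ω₂ : DF n r p) (ω₃ : DF n r q) :
    innerDF (comp ω₁ ω₂) ω₃ = compPairing ω₁ ω₂ ω₃ := by
  simp only [innerDF, comp, compPairing, Finset.sum_mul, Finset.mul_sum]
  push_cast
  rw [Finset.sum_congr rfl fun f _ => Finset.sum_comm]
  refine Finset.sum_congr rfl fun f _ => Finset.sum_congr rfl fun g _ =>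
    Finset.sum_congr rfl fun h _ => ?_
  ring

theorem compPairing_transp_left {n p q r : ℕ} (ω₁ : DF n p q) (ω₂ : DF n r p)
    (ω₃ : DF n r q) : compPairing (transp ω₁) ω₃ ω₂ = compPairing ω₁ ω₂ ω₃ := by
  simp only [compPairing, transp]
  rw [Finset.sum_congr rfl fun f _ => Finset.sum_comm]
  refine congrArg₂ _ (by push_cast; ring) (Finset.sum_congr rfl fun f _ =>
    Finset.sum_congr rfl fun g _ => Finset.sum_congr rfl fun h _ => by ring)

theorem compPairing_transp_right {n p q r : ℕ} (ω₁ : DF n p q) (ω₂ : DF n r p)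
    (ω₃ : DF n r q) : compPairing ω₃ (transp ω₂) ω₁ = compPairing ω₁ ω₂ ω₃ := by
  simp only [compPairing, transp]
  rw [Finset.sum_comm]
  refine congrArg₂ _ (by push_cast; ring) (Finset.sum_congr rfl fun f _ =>
    Finset.sum_congr rfl fun g _ => Finset.sum_congr rfl fun h _ => by ring)

/-- `⟨ω₁∘ω₂, ω₃⟩ = ⟨ω₂, ω₁ᵗ∘ω₃⟩ = ⟨ω₁, ω₃∘ω₂ᵗ⟩`. -/
theorem statement4 (n p q r : ℕ) (ω₁ : DF n p q) (ω₂ : DF n r p) (ω₃ : DF n r q) :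
    innerDF (comp ω₁ ω₂) ω₃ = innerDF ω₂ (comp (transp ω₁) ω₃) ∧
    innerDF (comp ω₁ ω₂) ω₃ = innerDF ω₁ (comp ω₃ (transp ω₂)) := by
  rw [innerDF_comm ω₂, innerDF_comm ω₁, innerDF_comp, innerDF_comp, innerDF_comp,
    compPairing_transp_left, compPairing_transp_right]
  exact ⟨rfl, rfl⟩
end
end

section
/- Let R be a symmetric (2,2) double form on a Euclidean n-space satisfying the first Bianchi identity, and (E_α) an orthonormal basis of Λ²V*. Then Σ_α ρ(R(E_α)) ∘ ρ(E_α) = −c R, where c R is the Ricci contraction of R, ρ is the inclusion Λ²V* → V*⊗V* with ρ(eⁱ∧eʲ) = eⁱ⊗eʲ − eʲ⊗eⁱ, and ∘ is the composition product of double forms. -/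
noncomputable section

open Finset
open scoped RealInnerProductSpace

/-! Completeness of `(E_α)` gives `∑_α E_α(u,v) E_α(w,z) = (u♭ ∧ v♭)(w,z)`. Since the curvature
operator is linear, `∑_α E_α(x,e_k) R(E_α) = R(x♭ ∧ e_k♭) = R(x, e_k; ·, ·)`, and evaluating at
`(e_k, y)` and summing over `k` gives `∑_k R(x, e_k; e_k, y) = -(c R)(x, y)` by antisymmetry. -/

section DoubleForms

variable {n : ℕ}

lemma inner_ebasis_left (i : Fin n) (v : Evec n) : ⟪ebasis n i, v⟫ = v i := by
  simp [ebasis, EuclideanSpace.inner_single_left]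

lemma inner_ebasis_right (i : Fin n) (v : Evec n) : ⟪v, ebasis n i⟫ = v i := by
  rw [real_inner_comm, inner_ebasis_left]

lemma IsLinearMap.eq_sum_ebasis {L : Evec n → ℝ} (hL : IsLinearMap ℝ L) (v : Evec n) :
    L v = ∑ i, v i * L (ebasis n i) := by
  have hv : ∑ i, v i • ebasis n i = v := by
    simpa [ebasis] using (EuclideanSpace.basisFun (Fin n) ℝ).sum_repr v
  conv_lhs => rw [← hv, ← IsLinearMap.mk'_apply hL, map_sum]
  simp only [IsLinearMap.mk'_apply, hL.map_smul, smul_eq_mul]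

lemma IsBilin.eq_sum_ebasis {B : Evec n → Evec n → ℝ} (hB : IsBilin B) (u v : Evec n) :
    B u v = ∑ i, ∑ j, u i * v j * B (ebasis n i) (ebasis n j) := by
  rw [(hB.1 v).eq_sum_ebasis u]
  refine sum_congr rfl fun i _ => ?_
  rw [(hB.2 _).eq_sum_ebasis v, mul_sum]
  exact sum_congr rfl fun j _ => by ring

lemma IsAltBilin.apply_swap {B : Evec n → Evec n → ℝ} (hB : IsAltBilin B) (u v : Evec n) :
    B u v = -B v u := by
  have h := hB.2 (u + v)
  rw [(hB.1.1 _).map_add, (hB.1.2 u).map_add, (hB.1.2 v).map_add, hB.2 u, hB.2 v] at h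
  linarith

lemma IsAltML.isLinearMap_update {m : ℕ} {f : Form n m} (hf : IsAltML f)
    (x : Fin m → Evec n) (i : Fin m) : IsLinearMap ℝ fun a => f (Function.update x i a) := by
  have h0 : f (Function.update x i 0) = 0 := by
    have h := hf.1 x i 1 0 0
    simp only [smul_zero, add_zero, one_mul] at h
    linarith
  refine ⟨fun a b => by simpa using hf.1 x i 1 a b, fun c a => ?_⟩
  simpa [h0] using hf.1 x i c a 0

lemma IsAltML.isAltBilin {f : Form n 2} (hf : IsAltML f) : IsAltBilin fun a b => f ![a, b] := by
  have fst : ∀ a b c : Evec n, Function.update ![a, b] 0 c = ![c, b] := fun a b c => by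
    funext i; fin_cases i <;> simp
  have snd : ∀ a b c : Evec n, Function.update ![a, b] 1 c = ![a, c] := fun a b c => by
    funext i; fin_cases i <;> simp
  refine ⟨⟨fun b => ?_, fun a => ?_⟩, fun a => hf.2 ![a, a] 0 1 (by decide) rfl⟩
  · simpa only [fst] using hf.isLinearMap_update ![0, b] 0
  · simpa only [snd] using hf.isLinearMap_update ![a, 0] 1

/-- The decomposable 2-form `u♭ ∧ v♭`. -/
def vecWedge (u v : Evec n) : Evec n → Evec n → ℝ :=
  fun w z => ⟪u, w⟫ * ⟪v, z⟫ - ⟪u, z⟫ * ⟪v, w⟫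

lemma isAltBilin_vecWedge (u v : Evec n) : IsAltBilin (vecWedge u v) := by
  refine ⟨⟨fun z => ⟨fun w w' => ?_, fun c w => ?_⟩, fun w => ⟨fun z z' => ?_, fun c z => ?_⟩⟩,
    fun w => ?_⟩ <;>
  simp only [vecWedge, inner_add_right, real_inner_smul_right, smul_eq_mul] <;> ring

lemma IsAltBilin.half_sum_vecWedge_mul {B : Evec n → Evec n → ℝ} (hB : IsAltBilin B)
    (u v : Evec n) :
    (2 : ℝ)⁻¹ * ∑ i, ∑ j, vecWedge u v (ebasis n i) (ebasis n j) * B (ebasis n i) (ebasis n j)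
      = B u v := by
  have hvu : B v u = ∑ i, ∑ j, u j * v i * B (ebasis n i) (ebasis n j) := by
    rw [hB.1.eq_sum_ebasis]
    exact sum_congr rfl fun i _ => sum_congr rfl fun j _ => by ring
  simp only [vecWedge, inner_ebasis_right, sub_mul, sum_sub_distrib]
  rw [← hB.1.eq_sum_ebasis, ← hvu, hB.apply_swap v u]
  ring

lemma inner2_vecWedge {B : Evec n → Evec n → ℝ} (hB : IsAltBilin B) (u v : Evec n) :
    inner2 (vecWedge u v) B = B u v :=
  hB.half_sum_vecWedge_mul u v

lemma curvOp_vecWedge {R : DF n 2 2} (hR : IsDF R) (u v a b : Evec n) :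
    curvOp R (vecWedge u v) a b = R ![u, v] ![a, b] :=
  ((hR.1 ![a, b]).isAltBilin).half_sum_vecWedge_mul u v

lemma sum_mul_curvOp {ι : Type*} [Fintype ι] (R : DF n 2 2) (c : ι → ℝ)
    (θ : ι → Evec n → Evec n → ℝ) (a b : Evec n) :
    ∑ α, c α * curvOp R (θ α) a b = curvOp R (fun w z => ∑ α, c α * θ α w z) a b := by
  simp only [curvOp, mul_sum, sum_mul]
  rw [sum_comm]
  refine sum_congr rfl fun i _ => ?_
  rw [sum_comm]
  exact sum_congr rfl fun j _ => sum_congr rfl fun α _ => by ring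

lemma sum_mul_eq_vecWedge {ι : Type*} [Fintype ι] {E : ι → Evec n → Evec n → ℝ}
    (hE : ∀ α, IsAltBilin (E α))
    (hCompl : ∀ θ : Evec n → Evec n → ℝ, IsAltBilin θ →
      ∀ x y, θ x y = ∑ α, inner2 θ (E α) * E α x y) (u v : Evec n) :
    (fun w z => ∑ α, E α u v * E α w z) = vecWedge u v := by
  funext w z
  rw [hCompl _ (isAltBilin_vecWedge u v) w z]
  simp only [inner2_vecWedge (hE _)]

lemma comp_rho_rho (A B : Evec n → Evec n → ℝ) (x y : Fin 1 → Evec n) :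
    comp (rho A) (rho B) x y = ∑ k, B (x 0) (ebasis n k) * A (ebasis n k) (y 0) := by
  simp only [comp, rho, Nat.factorial_one, Nat.cast_one, inv_one, one_mul]
  exact Fintype.sum_equiv (Equiv.funUnique (Fin 1) (Fin n)) _ _ fun _ => rfl

end DoubleForms

theorem statement6_general (n : ℕ) (R : DF n 2 2) (hR : IsDF R)
    (E : Fin (n * (n - 1) / 2) → (Evec n → Evec n → ℝ))
    (hE : ∀ α, IsAltBilin (E α))
    (hCompl : ∀ θ : Evec n → Evec n → ℝ, IsAltBilin θ →
      ∀ x y, θ x y = ∑ α, inner2 θ (E α) * E α x y) :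
    (∑ α, comp (rho (curvOp R (E α))) (rho (E α))) = -(ricci R) := by
  funext x y
  simp only [Finset.sum_apply, comp_rho_rho]
  rw [sum_comm]
  calc ∑ k, ∑ α, E α (x 0) (ebasis n k) * curvOp R (E α) (ebasis n k) (y 0)
      = ∑ k, curvOp R (vecWedge (x 0) (ebasis n k)) (ebasis n k) (y 0) := by
        simp only [sum_mul_curvOp, sum_mul_eq_vecWedge hE hCompl]
    _ = ∑ k, R ![x 0, ebasis n k] ![ebasis n k, y 0] := by
        simp only [curvOp_vecWedge hR]
    _ = -(ricci R) x y := by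
        simp only [ricci, ← sum_neg_distrib,
          ((hR.1 _).isAltBilin).apply_swap (x 0)]

/-- For a symmetric `(2,2)` double form `R` satisfying the first Bianchi
identity, and any orthonormal basis `(E_α)` of `Λ²V*`:
`∑_α ρ(R(E_α)) ∘ ρ(E_α) = − c R`. -/
theorem statement6 (n : ℕ) (R : DF n 2 2) (hR : IsDF R) (hsym : transp R = R)
    (hbianchi : FirstBianchi R)
    (E : Fin (n * (n - 1) / 2) → (Evec n → Evec n → ℝ))
    (hE : ∀ α, IsAltBilin (E α))
    (hON : ∀ α β, inner2 (E α) (E β) = if α = β then 1 else 0)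
    (hCompl : ∀ θ : Evec n → Evec n → ℝ, IsAltBilin θ →
      ∀ x y, θ x y = ∑ α, inner2 θ (E α) * E α x y) :
    (∑ α, comp (rho (curvOp R (E α))) (rho (E α))) = -(ricci R) :=
  statement6_general n R hR E hE hCompl
end
end

section
/- Let h : V → V be an endomorphism of a Euclidean space, ∧h its extension by derivations to the exterior algebra, and h also denote the associated bilinear form. Then for θ₁, θ₂ ∈ ΛᵖV with p ≥ 1, ⟨∧h(θ₁), θ₂⟩ = (g^{p−1}h/(p−1)!)(θ₁, θ₂), where g^{p−1}h denotes the exterior product of double forms. -/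
noncomputable section

open Finset
open scoped RealInnerProductSpace

/-!
Both sides are Gram determinants in disguise. By induction on the recursion `gᵖ⁺¹ = gᵖ ∧ g`,
`gᵖ(x, y) = p! · det ⟪xₐ, y_b⟫`. In the exterior product `gᵖ ∧ η` evaluated on `p + 1` vectors,
the permutation sum of each minor is absorbed into the outer permutation of the rows, and the
substitution `τ = μσ` turns what is left into the Leibniz expansion of the Gram matrix whose row
`σ(last)` is replaced by `η(x_{σ(last)}, ·)`. Hence
`(gᵖ ∧ η)(x, y) = p! · Σᵢ det (Gram matrix with row i replaced by η(xᵢ, y_·))`,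
and for `η = h` the `i`-th determinant is `⟨x₁ ∧ ⋯ ∧ h xᵢ ∧ ⋯ ∧ x_{p+1}, y₁ ∧ ⋯ ∧ y_{p+1}⟩`.
-/

open Equiv

namespace Equiv.Perm

variable {p : ℕ}

def extendLast (ρ : Perm (Fin p)) : Perm (Fin (p + 1)) :=
  finSuccEquivLast.symm.permCongr ρ.optionCongr

@[simp] theorem extendLast_castSucc (ρ : Perm (Fin p)) (j : Fin p) :
    extendLast ρ j.castSucc = (ρ j).castSucc := by
  simp [extendLast, Equiv.permCongr_apply]

@[simp] theorem extendLast_last (ρ : Perm (Fin p)) :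
    extendLast ρ (Fin.last p) = Fin.last p := by
  simp [extendLast, Equiv.permCongr_apply]

@[simp] theorem sign_extendLast (ρ : Perm (Fin p)) :
    sign (extendLast ρ) = sign ρ := by
  simp [extendLast, sign_permCongr]

end Equiv.Perm

section PermutationSums

variable {R : Type*} [CommRing R] {p : ℕ}

theorem sum_perm_apply_last {M : Type*} [AddCommMonoid M] (G : Fin (p + 1) → M) :
    ∑ σ : Perm (Fin (p + 1)), G (σ (Fin.last p)) = p.factorial • ∑ i, G i := by
  rw [← Equiv.sum_comp (Equiv.mulRight (swap 0 (Fin.last p))) fun σ => G (σ (Fin.last p)),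
    ← Equiv.sum_comp Perm.decomposeFin.symm, Fintype.sum_prod_type]
  simp [Perm.decomposeFin_symm_apply_zero, Finset.smul_sum, Fintype.card_perm]

theorem sum_sign_mul_det_submatrix_castSucc {ι : Type*} (C : Matrix (Fin (p + 1)) ι R)
    (c : Fin p → ι) (G : Fin (p + 1) → R) :
    ∑ σ : Perm (Fin (p + 1)),
        (Perm.sign σ : ℤ) * (C.submatrix (σ ∘ Fin.castSucc) c).det * G (σ (Fin.last p)) =
      p.factorial * ∑ σ : Perm (Fin (p + 1)),
        (Perm.sign σ : ℤ) * (∏ j, C (σ j.castSucc) (c j)) * G (σ (Fin.last p)) := by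
  set F : Perm (Fin (p + 1)) → R := fun σ =>
    (Perm.sign σ : ℤ) * (∏ j, C (σ j.castSucc) (c j)) * G (σ (Fin.last p))
  have hterm : ∀ σ : Perm (Fin (p + 1)),
      (Perm.sign σ : ℤ) * (C.submatrix (σ ∘ Fin.castSucc) c).det * G (σ (Fin.last p)) =
        ∑ ρ : Perm (Fin p), F (σ * ρ.extendLast) := by
    intro σ
    simp only [F, Matrix.det_apply', Matrix.submatrix_apply, Function.comp_apply,
      Finset.mul_sum, Finset.sum_mul, Perm.mul_apply, Perm.extendLast_castSucc,
      Perm.extendLast_last, Perm.sign_mul, Perm.sign_extendLast]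
    refine Finset.sum_congr rfl fun ρ _ => ?_
    push_cast
    ring
  rw [Finset.sum_congr rfl fun σ _ => hterm σ, Finset.sum_comm]
  have hshift : ∀ ρ : Perm (Fin p), ∑ σ, F (σ * ρ.extendLast) = ∑ σ, F σ := fun ρ =>
    Equiv.sum_comp (Equiv.mulRight ρ.extendLast) F
  rw [Finset.sum_congr rfl fun ρ _ => hshift ρ]
  rw [Finset.sum_const, Finset.card_univ, Fintype.card_perm, Fintype.card_fin, nsmul_eq_mul]

theorem sum_sign_mul_prod_castSucc_eq_det_updateRow (C D : Matrix (Fin (p + 1)) (Fin (p + 1)) R)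
    (σ : Perm (Fin (p + 1))) :
    ∑ τ : Perm (Fin (p + 1)), (Perm.sign σ : ℤ) * (Perm.sign τ : ℤ) *
        ((∏ j : Fin p, C (σ j.castSucc) (τ j.castSucc)) * D (σ (Fin.last p)) (τ (Fin.last p))) =
      (C.updateRow (σ (Fin.last p)) (D (σ (Fin.last p)))).det := by
  set M := C.updateRow (σ (Fin.last p)) (D (σ (Fin.last p)))
  have hrow : ∀ j : Fin p, M (σ j.castSucc) = C (σ j.castSucc) := fun j =>
    Matrix.updateRow_ne (σ.injective.ne (Fin.castSucc_lt_last j).ne)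
  rw [← Matrix.det_transpose, Matrix.det_apply',
    ← Equiv.sum_comp (Equiv.mulRight σ)]
  refine Finset.sum_congr rfl fun μ _ => ?_
  have hsign : ((Perm.sign σ : ℤ) : R) * (Perm.sign (μ * σ) : ℤ) = (Perm.sign μ : ℤ) := by
    rw [Perm.sign_mul, Units.val_mul, Int.cast_mul, mul_left_comm, ← Int.cast_mul,
      ← Units.val_mul, Int.units_mul_self, Units.val_one, Int.cast_one, mul_one]
  simp only [Equiv.coe_mulRight, Perm.mul_apply, Matrix.transpose_apply]
  rw [hsign, ← Equiv.prod_comp σ fun b => M b (μ b), Fin.prod_univ_castSucc]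
  simp only [hrow, M, Matrix.updateRow_self]

theorem sum_sign_mul_sign_mul_det_submatrix_castSucc
    (C D : Matrix (Fin (p + 1)) (Fin (p + 1)) R) :
    ∑ σ : Perm (Fin (p + 1)), ∑ τ : Perm (Fin (p + 1)),
        (Perm.sign σ : ℤ) * (Perm.sign τ : ℤ) *
          (C.submatrix (σ ∘ Fin.castSucc) (τ ∘ Fin.castSucc)).det *
          D (σ (Fin.last p)) (τ (Fin.last p)) =
      p.factorial * p.factorial * ∑ i, (C.updateRow i (D i)).det := by
  have hminor : ∀ τ : Perm (Fin (p + 1)),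
      ∑ σ : Perm (Fin (p + 1)), (Perm.sign σ : ℤ) * (Perm.sign τ : ℤ) *
          (C.submatrix (σ ∘ Fin.castSucc) (τ ∘ Fin.castSucc)).det *
          D (σ (Fin.last p)) (τ (Fin.last p)) =
        p.factorial * ∑ σ : Perm (Fin (p + 1)), (Perm.sign σ : ℤ) * (Perm.sign τ : ℤ) *
          ((∏ j : Fin p, C (σ j.castSucc) (τ j.castSucc)) * D (σ (Fin.last p)) (τ (Fin.last p))) := by
    intro τ
    have hexpand :=
      sum_sign_mul_det_submatrix_castSucc C (τ ∘ Fin.castSucc) (D · (τ (Fin.last p)))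
    calc _ = (Perm.sign τ : ℤ) * ∑ σ : Perm (Fin (p + 1)), (Perm.sign σ : ℤ) *
            (C.submatrix (σ ∘ Fin.castSucc) (τ ∘ Fin.castSucc)).det *
            D (σ (Fin.last p)) (τ (Fin.last p)) := by
          rw [Finset.mul_sum]
          exact Finset.sum_congr rfl fun σ _ => by ring
      _ = _ := by
          rw [hexpand, Finset.mul_sum, Finset.mul_sum, Finset.mul_sum]
          exact Finset.sum_congr rfl fun σ _ => by simp only [Function.comp_apply]; ring
  rw [Finset.sum_comm, Finset.sum_congr rfl fun τ _ => hminor τ, ← Finset.mul_sum,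
    Finset.sum_comm]
  simp only [sum_sign_mul_prod_castSucc_eq_det_updateRow]
  rw [sum_perm_apply_last (fun i => (C.updateRow i (D i)).det), nsmul_eq_mul, mul_assoc]

end PermutationSums

section InnerMatrix

variable {E : Type*} [Inner ℝ E]

def innerMatrix {p q : ℕ} (x : Fin p → E) (y : Fin q → E) : Matrix (Fin p) (Fin q) ℝ :=
  Matrix.of fun a b => ⟪x a, y b⟫

theorem innerMatrix_update_left {p q : ℕ} (x : Fin p → E) (i : Fin p) (u : E) (y : Fin q → E) :
    innerMatrix (Function.update x i u) y = (innerMatrix x y).updateRow i fun b => ⟪u, y b⟫ := by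
  ext a b
  rcases eq_or_ne a i with rfl | ha
  · simp [innerMatrix]
  · simp [innerMatrix, ha]

end InnerMatrix

theorem wedge_apply_of_eq_det {n p : ℕ} {ω : DF n p p}
    (hω : ∀ x y, ω x y = p.factorial * (innerMatrix x y).det) (η : DF n 1 1)
    (x y : Fin (p + 1) → Evec n) :
    wedge ω η x y = p.factorial *
      ∑ i, ((innerMatrix x y).updateRow i fun b => η (fun _ => x i) (fun _ => y b)).det := by
  have hlast : ∀ (σ : Perm (Fin (p + 1))) (z : Fin (p + 1) → Evec n),
      (fun k : Fin 1 => z (σ (Fin.natAdd p k))) = fun _ => z (σ (Fin.last p)) := fun σ z =>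
    funext fun k => by rw [Fin.fin_one_eq_zero k]; rfl
  have hminor : ∀ σ τ : Perm (Fin (p + 1)),
      innerMatrix (fun i => x (σ (Fin.castAdd 1 i))) (fun j => y (τ (Fin.castAdd 1 j))) =
        (innerMatrix x y).submatrix (σ ∘ Fin.castSucc) (τ ∘ Fin.castSucc) := fun _ _ => rfl
  have hexpand := sum_sign_mul_sign_mul_det_submatrix_castSucc (innerMatrix x y)
    (fun a b => η (fun _ => x a) (fun _ => y b))
  simp only [mul_assoc, ← Finset.mul_sum] at hexpand
  unfold wedge
  simp only [hω, hlast, hminor, Nat.factorial_one, mul_one, mul_assoc,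
    mul_left_comm _ (p.factorial : ℝ), ← Finset.mul_sum]
  rw [hexpand, Nat.cast_mul]
  field_simp

theorem gpow_apply (n p : ℕ) (x y : Fin p → Evec n) :
    gpow n p x y = p.factorial * (innerMatrix x y).det := by
  induction p with
  | zero => simp [gpow]
  | succ p ih =>
    have hrow : ∀ i, ((innerMatrix x y).updateRow i fun b => gdf n (fun _ => x i) fun _ => y b) =
        innerMatrix x y := fun i => Matrix.updateRow_eq_self _ i
    rw [gpow, wedge_apply_of_eq_det ih]
    simp only [hrow, Finset.sum_const, Finset.card_univ, Fintype.card_fin, nsmul_eq_mul,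
      Nat.factorial_succ, Nat.cast_mul]
    ring

/-- For an endomorphism `h` of `V` and its derivation extension `∧h` to
`Λ^{p+1}V`, one has `⟨∧h(θ₁), θ₂⟩ = (gᵖ h / p!)(θ₁, θ₂)` for all `θ₁, θ₂ ∈ Λ^{p+1}V`
(checked on decomposable vectors, the inner product being the Gram determinant). -/
theorem statement10 (n p : ℕ) (h : Evec n →ₗ[ℝ] Evec n) (v w : Fin (p + 1) → Evec n) :
    (∑ i : Fin (p + 1),
        Matrix.det (Matrix.of (fun a b : Fin (p + 1) =>
          (⟪Function.update v i (h (v i)) a, w b⟫)))) =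
      ((p.factorial : ℝ))⁻¹ * wedge (gpow n p) (hdf h) v w := by
  have hfac : (p.factorial : ℝ) ≠ 0 := Nat.cast_ne_zero.mpr p.factorial_ne_zero
  rw [wedge_apply_of_eq_det (gpow_apply n p), inv_mul_cancel_left₀ hfac]
  exact Finset.sum_congr rfl fun i _ => congrArg Matrix.det (innerMatrix_update_left v i _ w)
end
end

section
/- Let (E_i) be an orthonormal basis of Λ²V* of a Euclidean n-space, N = n(n−1)/2. Then −Σ_{i=1}^{N} (g^{p−1}ρ(E_i)/(p−1)!) ∘ (g^{p−1}ρ(E_i)/(p−1)!) = p(n−p) · gᵖ/p! as (p,p) double forms. -/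
noncomputable section

open Finset
open scoped RealInnerProductSpace

/-!
Let `P(a, b) = ∏ᵢ ⟪aᵢ, bᵢ⟫` and let `D_h P(a, b) = ∑ₖ h(aₖ, bₖ) ∏_{i ≠ k} ⟪aᵢ, bᵢ⟫` be its
derivative in the direction of a bilinear form `h`. Antisymmetrizing in the second argument,
`gᵖ = p! · Alt P` (a Gram determinant) and `g^{p-1} ρ(h) / (p-1)! = Alt (D_h P)`, and the
composition of two such antisymmetrizations is the two-sided antisymmetrization of the
composition of the kernels. Summed over the basis, the completeness relation
`∑_α E_α(a, b) E_α(c, d) = ⟪a, c⟫⟪b, d⟫ - ⟪a, d⟫⟪b, c⟫` turns `∑_α D_{E_α}P ∘ D_{E_α}P` into a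
sum over pairs of slots `(s, l)`. A diagonal pair contributes `(1 - n) P`; an off-diagonal pair
contributes a kernel symmetric in `a_s, a_l`, which antisymmetrizes to zero, minus
`P(a ∘ (s l), b)`, which antisymmetrizes to `+p! Alt P`. The total coefficient is
`p (1 - n) + p (p - 1) = -p (n - p)`.
-/

namespace DoubleForm

open Equiv Equiv.Perm Finset
open Function (update update_self update_of_ne comp_apply comp_assoc comp_id)

variable {n p : ℕ}

def sgn (σ : Perm (Fin p)) : ℝ := ((sign σ : ℤ) : ℝ)

@[simp] lemma sgn_mul (σ τ : Perm (Fin p)) : sgn (σ * τ) = sgn σ * sgn τ := by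
  simp [sgn]

@[simp] lemma sgn_inv (σ : Perm (Fin p)) : sgn σ⁻¹ = sgn σ := by
  simp [sgn]

@[simp] lemma sgn_mul_self (σ : Perm (Fin p)) : sgn σ * sgn σ = 1 := by
  rcases Int.units_eq_one_or (sign σ) with h | h <;> simp [sgn, h]

lemma sgn_swap {i j : Fin p} (h : i ≠ j) : sgn (swap i j) = -1 := by
  simp [sgn, sign_swap h]

section Alternatization

variable {q : ℕ}

def alternatize : DF n p q →ₗ[ℝ] DF n p q where
  toFun Φ x y := ∑ σ : Perm (Fin p), ∑ τ : Perm (Fin q), sgn σ * sgn τ * Φ (x ∘ σ) (y ∘ τ)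
  map_add' Φ Ψ := by
    ext x y
    simp only [Pi.add_apply, mul_add, Finset.sum_add_distrib]
  map_smul' c Φ := by
    ext x y
    simp only [Pi.smul_apply, smul_eq_mul, RingHom.id_apply, Finset.mul_sum]
    exact Finset.sum_congr rfl fun _ _ => Finset.sum_congr rfl fun _ _ => by ring

lemma alternatize_apply (Φ : DF n p q) (x y) :
    alternatize Φ x y =
      ∑ σ : Perm (Fin p), ∑ τ : Perm (Fin q), sgn σ * sgn τ * Φ (x ∘ σ) (y ∘ τ) :=
  rfl

lemma alternatize_comp_left (π : Perm (Fin p)) (Φ : DF n p q) :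
    alternatize (fun a b => Φ (a ∘ π) b) = sgn π • alternatize Φ := by
  ext x y
  simp only [alternatize_apply, Pi.smul_apply, smul_eq_mul, Finset.mul_sum]
  refine Fintype.sum_equiv (Equiv.mulRight π) _ _ fun σ => Finset.sum_congr rfl fun τ _ => ?_
  simp only [coe_mulRight, sgn_mul, Perm.coe_mul, comp_assoc]
  linear_combination (-(sgn σ * sgn τ * Φ (x ∘ σ ∘ π) (y ∘ τ))) * sgn_mul_self π

lemma alternatize_comp_right (π : Perm (Fin q)) (Φ : DF n p q) :
    alternatize (fun a b => Φ a (b ∘ π)) = sgn π • alternatize Φ := by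
  ext x y
  simp only [alternatize_apply, Pi.smul_apply, smul_eq_mul, Finset.mul_sum]
  refine Finset.sum_congr rfl fun σ _ =>
    Fintype.sum_equiv (Equiv.mulRight π) _ _ fun τ => ?_
  simp only [coe_mulRight, sgn_mul, Perm.coe_mul, comp_assoc]
  linear_combination (-(sgn σ * sgn τ * Φ (x ∘ σ) (y ∘ τ ∘ π))) * sgn_mul_self π

lemma alternatize_comp_perm (σ : Perm (Fin p)) (τ : Perm (Fin q)) (Φ : DF n p q) :
    alternatize (fun a b => Φ (a ∘ σ) (b ∘ τ)) = (sgn σ * sgn τ) • alternatize Φ := by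
  rw [alternatize_comp_left σ (fun a b => Φ a (b ∘ τ)), alternatize_comp_right, smul_smul]

lemma alternatize_eq_zero_of_comp_swap {i j : Fin p} (hij : i ≠ j) {Φ : DF n p q}
    (hΦ : (fun a b => Φ (a ∘ swap i j) b) = Φ) : alternatize Φ = 0 := by
  have h := alternatize_comp_left (swap i j) Φ
  rw [hΦ, sgn_swap hij, neg_one_smul] at h
  exact self_eq_neg.mp h

end Alternatization

def alternatizeRight : DF n p p →ₗ[ℝ] DF n p p where
  toFun Φ x y := ∑ ρ : Perm (Fin p), sgn ρ * Φ x (y ∘ ρ)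
  map_add' Φ Ψ := by
    ext x y
    simp only [Pi.add_apply, mul_add, Finset.sum_add_distrib]
  map_smul' c Φ := by
    ext x y
    simp only [Pi.smul_apply, smul_eq_mul, RingHom.id_apply, Finset.mul_sum]
    exact Finset.sum_congr rfl fun _ _ => by ring

lemma alternatizeRight_apply (Φ : DF n p p) (x y) :
    alternatizeRight Φ x y = ∑ ρ : Perm (Fin p), sgn ρ * Φ x (y ∘ ρ) :=
  rfl

def IsPermInvariant (Φ : DF n p p) : Prop :=
  ∀ (σ : Perm (Fin p)) (a b : Fin p → Evec n), Φ (a ∘ σ) (b ∘ σ) = Φ a b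

lemma IsPermInvariant.alternatizeRight_apply_left {Φ : DF n p p} (hΦ : IsPermInvariant Φ) (x y) :
    alternatizeRight Φ x y = ∑ σ : Perm (Fin p), sgn σ * Φ (x ∘ σ) y := by
  rw [alternatizeRight_apply]
  refine Fintype.sum_equiv (Equiv.inv _) _ _ fun ρ => ?_
  have h := hΦ ρ (x ∘ ⇑ρ⁻¹) y
  rw [comp_assoc, ← Perm.coe_mul, inv_mul_cancel, Perm.coe_one, comp_id] at h
  simp only [Equiv.inv_apply, sgn_inv, h]

lemma IsPermInvariant.alternatize_eq {Φ : DF n p p} (hΦ : IsPermInvariant Φ) :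
    alternatize Φ = (p.factorial : ℝ) • alternatizeRight Φ := by
  ext x y
  have key : ∀ σ : Perm (Fin p),
      ∑ τ : Perm (Fin p), sgn σ * sgn τ * Φ (x ∘ σ) (y ∘ τ) = alternatizeRight Φ x y := by
    intro σ
    refine Fintype.sum_equiv (Equiv.mulRight σ⁻¹) _ _ fun τ => ?_
    have h := hΦ σ⁻¹ (x ∘ σ) (y ∘ τ)
    rw [comp_assoc, ← Perm.coe_mul, mul_inv_cancel, Perm.coe_one, comp_id, comp_assoc,
      ← Perm.coe_mul] at h
    simp only [coe_mulRight, sgn_mul, sgn_inv, h]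
    ring
  simp only [alternatize_apply, key, Finset.sum_const, Finset.card_univ,
    Fintype.card_perm, Fintype.card_fin, nsmul_eq_mul, Pi.smul_apply, smul_eq_mul]

def prodInner : DF n p p := fun a b => ∏ i, ⟪a i, b i⟫

def prodInnerDerivAt (h : Evec n → Evec n → ℝ) (k : Fin p) : DF n p p :=
  fun a b => h (a k) (b k) * ∏ i ∈ univ.erase k, ⟪a i, b i⟫

def prodInnerDeriv (h : Evec n → Evec n → ℝ) : DF n p p := ∑ k, prodInnerDerivAt h k

lemma prodInnerDeriv_apply (h : Evec n → Evec n → ℝ) (a b : Fin p → Evec n) :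
    prodInnerDeriv h a b = ∑ k, h (a k) (b k) * ∏ i ∈ univ.erase k, ⟪a i, b i⟫ := by
  simp only [prodInnerDeriv, Finset.sum_apply, prodInnerDerivAt]

lemma prodInnerDeriv_inner :
    prodInnerDeriv (fun u v : Evec n => ⟪u, v⟫) = (p : ℝ) • (prodInner : DF n p p) := by
  ext a b
  simp only [prodInnerDeriv_apply, mul_prod_erase _ (fun i => ⟪a i, b i⟫) (mem_univ _),
    Finset.sum_const, card_univ, Fintype.card_fin, nsmul_eq_mul, Pi.smul_apply, smul_eq_mul,
    prodInner]

lemma isPermInvariant_prodInner : IsPermInvariant (prodInner : DF n p p) :=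
  fun σ a b => Equiv.prod_comp σ fun i => ⟪a i, b i⟫

lemma prodInnerDerivAt_comp_perm (h : Evec n → Evec n → ℝ) (k : Fin p) (σ : Perm (Fin p))
    (a b : Fin p → Evec n) :
    prodInnerDerivAt h k (a ∘ σ) (b ∘ σ) = prodInnerDerivAt h (σ k) a b := by
  simp only [prodInnerDerivAt, comp_apply]
  congr 1
  exact Finset.prod_equiv σ (by simp) (by simp)

lemma isPermInvariant_prodInnerDeriv (h : Evec n → Evec n → ℝ) :
    IsPermInvariant (prodInnerDeriv h : DF n p p) := by
  intro σ a b
  simp only [prodInnerDeriv, Finset.sum_apply, prodInnerDerivAt_comp_perm]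
  exact Equiv.sum_comp σ fun k => prodInnerDerivAt h k a b

lemma prod_erase_last {M : Type*} [CommMonoid M] {q : ℕ} (F : Fin (q + 1) → M) :
    ∏ m ∈ univ.erase (Fin.last q), F m = ∏ i : Fin q, F i.castSucc := by
  have h := prod_update_of_mem (mem_univ (Fin.last q)) F 1
  rw [one_mul, Finset.sdiff_singleton_eq_erase] at h
  rw [← h, Fin.prod_univ_castSucc, update_self, mul_one]
  exact Finset.prod_congr rfl fun i _ => update_of_ne (Fin.castSucc_lt_last i).ne _ _

def extendLast {q : ℕ} (π : Perm (Fin q)) : Perm (Fin (q + 1)) :=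
  finSuccEquivLast.symm.permCongr (optionCongr π)

@[simp] lemma extendLast_castSucc {q : ℕ} (π : Perm (Fin q)) (i : Fin q) :
    extendLast π i.castSucc = (π i).castSucc := by
  simp [extendLast, permCongr_apply]

@[simp] lemma extendLast_last {q : ℕ} (π : Perm (Fin q)) :
    extendLast π (Fin.last q) = Fin.last q := by
  simp [extendLast, permCongr_apply]

@[simp] lemma sgn_extendLast {q : ℕ} (π : Perm (Fin q)) : sgn (extendLast π) = sgn π := by
  simp [sgn, extendLast, sign_permCongr, optionCongr_sign]

lemma wedge_eq_alternatize {p q r s : ℕ} (ω : DF n p q) (η : DF n r s) :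
    wedge ω η = ((p.factorial * r.factorial * q.factorial * s.factorial : ℕ) : ℝ)⁻¹ •
      alternatize fun a b =>
        ω (a ∘ Fin.castAdd r) (b ∘ Fin.castAdd s) * η (a ∘ Fin.natAdd p) (b ∘ Fin.natAdd q) := by
  ext x y
  simp only [wedge, Pi.smul_apply, smul_eq_mul, alternatize_apply, sgn, mul_assoc]
  rfl

lemma alternatize_prodInnerDerivAt_last {q : ℕ} (h : Evec n → Evec n → ℝ) :
    alternatize (prodInnerDerivAt h (Fin.last q)) =
      (q.factorial : ℝ) • alternatizeRight (prodInnerDeriv h) := by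
  have hk : ∀ k, prodInnerDerivAt h k = fun a b =>
      prodInnerDerivAt h (Fin.last q) (a ∘ swap k (Fin.last q)) (b ∘ swap k (Fin.last q)) := by
    intro k
    ext a b
    rw [prodInnerDerivAt_comp_perm, swap_apply_right]
  have hsum : alternatize (prodInnerDeriv h) =
      ((q + 1 : ℕ) : ℝ) • alternatize (prodInnerDerivAt h (Fin.last q)) := by
    simp only [prodInnerDeriv, map_sum]
    conv_lhs => arg 2; ext k; rw [hk k, alternatize_comp_perm, sgn_mul_self, one_smul]
    rw [Finset.sum_const, card_univ, Fintype.card_fin, Nat.cast_smul_eq_nsmul]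
  rw [(isPermInvariant_prodInnerDeriv h).alternatize_eq, Nat.factorial_succ, Nat.cast_mul,
    mul_smul] at hsum
  exact smul_right_injective _ (by positivity : ((q + 1 : ℕ) : ℝ) ≠ 0) hsum.symm

lemma wedge_rho {q : ℕ} {ω : DF n q q}
    (hω : ω = (q.factorial : ℝ) • alternatizeRight prodInner) (h : Evec n → Evec n → ℝ) :
    wedge ω (rho h) = (q.factorial : ℝ) • alternatizeRight (prodInnerDeriv h) := by
  -- the Gram determinant of the first `q` slots is absorbed by the outer antisymmetrization
  have hΦ : (fun a b => ω (a ∘ Fin.castAdd 1) (b ∘ Fin.castAdd 1) *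
        rho h (a ∘ Fin.natAdd q) (b ∘ Fin.natAdd q)) =
      (q.factorial : ℝ) • ∑ π : Perm (Fin q),
        sgn π • fun a b => prodInnerDerivAt h (Fin.last q) a (b ∘ extendLast π) := by
    ext a b
    simp only [hω, Pi.smul_apply, smul_eq_mul, Finset.sum_apply, alternatizeRight_apply,
      prodInner, prodInnerDerivAt, rho, prod_erase_last, comp_apply, extendLast_castSucc,
      extendLast_last, Finset.mul_sum, Finset.sum_mul]
    refine Finset.sum_congr rfl fun π _ => ?_
    simp only [show ∀ i : Fin q, Fin.castAdd 1 i = i.castSucc from fun _ => rfl,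
      show Fin.natAdd q (0 : Fin 1) = Fin.last q from rfl]
    ring
  rw [wedge_eq_alternatize, hΦ, map_smul, map_sum]
  simp only [map_smul, alternatize_comp_right, sgn_extendLast, smul_smul, sgn_mul_self,
    one_smul]
  rw [Finset.sum_const, card_univ, Fintype.card_perm, Fintype.card_fin,
    alternatize_prodInnerDerivAt_last, ← Nat.cast_smul_eq_nsmul ℝ, smul_smul, smul_smul]
  congr 1
  have : (q.factorial : ℝ) ≠ 0 := by positivity
  simp only [Nat.factorial_one, mul_one, Nat.cast_mul]
  field_simp

theorem gpow_eq (p : ℕ) : gpow n p = (p.factorial : ℝ) • alternatizeRight prodInner := by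
  induction p with
  | zero =>
    ext x y
    simp [gpow, alternatizeRight_apply, prodInner, sgn]
  | succ q ih =>
    rw [gpow, show gdf n = rho fun u v => ⟪u, v⟫ from rfl, wedge_rho ih, prodInnerDeriv_inner,
      map_smul, smul_smul, Nat.factorial_succ, Nat.cast_mul, mul_comm]

theorem gPowRho_eq (p : ℕ) (h : Evec n → Evec n → ℝ) :
    gPowRho p h = alternatizeRight (prodInnerDeriv h) := by
  cases p with
  | zero =>
    ext x y
    simp [gPowRho, alternatizeRight_apply, prodInnerDeriv_apply]
  | succ q =>
    rw [gPowRho, wedge_rho (gpow_eq q), smul_smul, inv_mul_cancel₀ (by positivity), one_smul]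

lemma comp_alternatizeRight (Ψ₁ Ψ₂ : DF n p p) (hΨ₂ : IsPermInvariant Ψ₂) :
    comp (alternatizeRight Ψ₁) (alternatizeRight Ψ₂) = alternatize (comp Ψ₁ Ψ₂) := by
  ext x y
  simp only [comp, hΨ₂.alternatizeRight_apply_left, alternatizeRight_apply,
    alternatize_apply, Finset.sum_mul_sum]
  simp only [Finset.mul_sum]
  rw [Finset.sum_comm]
  refine Finset.sum_congr rfl fun σ _ => ?_
  rw [Finset.sum_comm]
  exact Finset.sum_congr rfl fun τ _ => Finset.sum_congr rfl fun f _ => by ring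

lemma coe_basisFun : ⇑(EuclideanSpace.basisFun (Fin n) ℝ) = ebasis n := by
  ext1 i
  simp [ebasis]

lemma sum_inner_ebasis_mul_inner (u v : Evec n) :
    ∑ c, ⟪u, ebasis n c⟫ * ⟪ebasis n c, v⟫ = ⟪u, v⟫ := by
  rw [← coe_basisFun]
  exact OrthonormalBasis.sum_inner_mul_inner _ u v

lemma inner_ebasis_self (c : Fin n) : ⟪ebasis n c, ebasis n c⟫ = 1 := by
  simp [ebasis]

lemma sum_inner_ebasis_mul_apply {f : Evec n → ℝ} (hf : IsLinearMap ℝ f) (v : Evec n) :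
    ∑ c, ⟪ebasis n c, v⟫ * f (ebasis n c) = f v := by
  let L := IsLinearMap.mk' f hf
  have hrepr := (EuclideanSpace.basisFun (Fin n) ℝ).sum_repr' v
  rw [coe_basisFun] at hrepr
  calc ∑ c, ⟪ebasis n c, v⟫ * f (ebasis n c) = L (∑ c, ⟪ebasis n c, v⟫ • ebasis n c) := by
        simp [L, map_sum, map_smul]
    _ = f v := by rw [hrepr]; rfl

lemma sum_prodInner_ebasis (u v : Fin p → Evec n) :
    ∑ f : Fin p → Fin n, prodInner u (fun i => ebasis n (f i)) *
      prodInner (fun i => ebasis n (f i)) v = prodInner u v := by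
  simp only [prodInner, ← Finset.prod_mul_distrib]
  rw [← Fintype.prod_sum fun m c => ⟪u m, ebasis n c⟫ * ⟪ebasis n c, v m⟫]
  exact Finset.prod_congr rfl fun m _ => sum_inner_ebasis_mul_inner (u m) (v m)

lemma prodInner_update_left (a z : Fin p → Evec n) (s : Fin p) (c : Evec n) :
    prodInner (update a s c) z = ⟪c, z s⟫ * ∏ m ∈ univ.erase s, ⟪a m, z m⟫ := by
  rw [prodInner, ← mul_prod_erase _ _ (mem_univ s), update_self]
  exact congrArg _ <| Finset.prod_congr rfl fun m hm => by rw [update_of_ne (ne_of_mem_erase hm)]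

lemma prodInner_update_right (z b : Fin p → Evec n) (l : Fin p) (c : Evec n) :
    prodInner z (update b l c) = ⟪z l, c⟫ * ∏ m ∈ univ.erase l, ⟪z m, b m⟫ := by
  rw [prodInner, ← mul_prod_erase _ _ (mem_univ l), update_self]
  exact congrArg _ <| Finset.prod_congr rfl fun m hm => by rw [update_of_ne (ne_of_mem_erase hm)]

lemma prodInner_update_update_self (a b : Fin p → Evec n) (s : Fin p) (u v : Evec n) :
    prodInner (update a s u) (update b s v) = ⟪u, v⟫ * ∏ m ∈ univ.erase s, ⟪a m, b m⟫ := by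
  rw [prodInner, ← mul_prod_erase _ _ (mem_univ s), update_self, update_self]
  refine congrArg _ (Finset.prod_congr rfl fun m hm => ?_)
  rw [update_of_ne (ne_of_mem_erase hm), update_of_ne (ne_of_mem_erase hm)]

lemma prod_eq_mul_mul_prod_erase_erase {ι M : Type*} [Fintype ι] [DecidableEq ι]
    [CommMonoid M] {s l : ι} (h : s ≠ l) (F : ι → M) :
    ∏ m, F m = F s * F l * ∏ m ∈ (univ.erase s).erase l, F m := by
  rw [← mul_prod_erase _ F (mem_univ s),
    ← mul_prod_erase _ F (mem_erase.mpr ⟨h.symm, mem_univ l⟩), mul_assoc]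

lemma prodInner_update_update {s l : Fin p} (h : s ≠ l) (a b : Fin p → Evec n) (u v : Evec n) :
    prodInner (update a s u) (update b l v) =
      ⟪u, b s⟫ * ⟪a l, v⟫ * ∏ m ∈ (univ.erase s).erase l, ⟪a m, b m⟫ := by
  rw [prodInner, prod_eq_mul_mul_prod_erase_erase h, update_self, update_self,
    update_of_ne h, update_of_ne h.symm]
  refine congrArg _ (Finset.prod_congr rfl fun m hm => ?_)
  obtain ⟨hml, hm⟩ := mem_erase.mp hm
  rw [update_of_ne hml, update_of_ne (ne_of_mem_erase hm)]

lemma IsAltBilin.apply_swap {β : Evec n → Evec n → ℝ} (hβ : IsAltBilin β) (x y : Evec n) :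
    β y x = -β x y := by
  have h := hβ.2 (x + y)
  rw [(hβ.1.1 (x + y)).map_add, (hβ.1.2 x).map_add, (hβ.1.2 y).map_add, hβ.2 x, hβ.2 y] at h
  linarith

lemma IsBilin.sum_inner_ebasis {β : Evec n → Evec n → ℝ} (hβ : IsBilin β) (x y : Evec n) :
    ∑ i, ∑ j, ⟪x, ebasis n i⟫ * ⟪y, ebasis n j⟫ * β (ebasis n i) (ebasis n j) = β x y := by
  simp_rw [real_inner_comm (ebasis n _), mul_assoc, ← Finset.mul_sum,
    sum_inner_ebasis_mul_apply (hβ.2 _)]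
  exact sum_inner_ebasis_mul_apply (hβ.1 y) x

lemma isAltBilin_wedge_inner (a b : Evec n) :
    IsAltBilin fun u v : Evec n => ⟪a, u⟫ * ⟪b, v⟫ - ⟪a, v⟫ * ⟪b, u⟫ := by
  refine ⟨⟨fun v => ⟨fun u w => ?_, fun c u => ?_⟩, fun u => ⟨fun v w => ?_, fun c v => ?_⟩⟩,
    fun u => by ring⟩ <;>
  · simp only [inner_add_right, inner_smul_right, smul_eq_mul]
    ring

lemma inner2_wedge_inner {β : Evec n → Evec n → ℝ} (hβ : IsAltBilin β) (a b : Evec n) :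
    inner2 (fun u v : Evec n => ⟪a, u⟫ * ⟪b, v⟫ - ⟪a, v⟫ * ⟪b, u⟫) β = β a b := by
  have hba := IsBilin.sum_inner_ebasis hβ.1 b a
  rw [IsAltBilin.apply_swap hβ] at hba
  simp only [inner2, sub_mul, Finset.sum_sub_distrib]
  rw [IsBilin.sum_inner_ebasis hβ.1 a b]
  simp_rw [mul_comm ⟪a, ebasis n _⟫ ⟪b, ebasis n _⟫]
  rw [hba]
  ring

lemma sum_mul_of_complete {ι : Type*} [Fintype ι] (E : ι → Evec n → Evec n → ℝ)
    (hE : ∀ α, IsAltBilin (E α))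
    (hCompl : ∀ θ : Evec n → Evec n → ℝ, IsAltBilin θ →
      ∀ x y, θ x y = ∑ α, inner2 θ (E α) * E α x y)
    (a b c d : Evec n) :
    ∑ α, E α a b * E α c d = ⟪a, c⟫ * ⟪b, d⟫ - ⟪a, d⟫ * ⟪b, c⟫ := by
  rw [hCompl _ (isAltBilin_wedge_inner a b) c d]
  simp only [inner2_wedge_inner (hE _)]

/- What slot `s` of `a` and slot `l` of `b` contribute to `p! ∑_α D_{E_α}P ∘ D_{E_α}P`, once the
completeness relation is applied; the sum over `c` is `⟪z s, z l⟫` expanded in the standard basis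
(`z` being the intermediate tuple of the composition). -/
def slotPairTerm (s l : Fin p) : DF n p p := fun a b =>
  prodInner (update a s (b l)) (update b l (a s)) -
    ⟪a s, b l⟫ * ∑ c, prodInner (update a s (ebasis n c)) (update b l (ebasis n c))

section CompletenessRelation

variable {ι : Type*} [Fintype ι] {E : ι → Evec n → Evec n → ℝ}

lemma sum_prodInnerDeriv_mul_prodInnerDeriv
    (hE : ∀ a b c d : Evec n, ∑ α, E α a b * E α c d = ⟪a, c⟫ * ⟪b, d⟫ - ⟪a, d⟫ * ⟪b, c⟫)
    (a b z : Fin p → Evec n) :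
    ∑ α, prodInnerDeriv (E α) a z * prodInnerDeriv (E α) z b =
      ∑ s, ∑ l, (prodInner (update a s (b l)) z * prodInner z (update b l (a s)) -
        ⟪a s, b l⟫ * ∑ c, prodInner (update a s (ebasis n c)) z *
          prodInner z (update b l (ebasis n c))) := by
  simp only [prodInnerDeriv_apply, Finset.sum_mul_sum]
  rw [Finset.sum_comm]
  refine Finset.sum_congr rfl fun s _ => ?_
  rw [Finset.sum_comm]
  refine Finset.sum_congr rfl fun l _ => ?_
  simp only [prodInner_update_left, prodInner_update_right]
  set P := ∏ i ∈ univ.erase s, ⟪a i, z i⟫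
  set Q := ∏ i ∈ univ.erase l, ⟪z i, b i⟫
  have hL : ∑ α, (E α (a s) (z s) * P) * (E α (z l) (b l) * Q) =
      (∑ α, E α (a s) (z s) * E α (z l) (b l)) * (P * Q) := by
    rw [Finset.sum_mul]
    exact Finset.sum_congr rfl fun _ _ => by ring
  have hR : ∑ c, (⟪ebasis n c, z s⟫ * P) * (⟪z l, ebasis n c⟫ * Q) =
      (∑ c, ⟪z l, ebasis n c⟫ * ⟪ebasis n c, z s⟫) * (P * Q) := by
    rw [Finset.sum_mul]
    exact Finset.sum_congr rfl fun _ _ => by ring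
  rw [hL, hR, hE, sum_inner_ebasis_mul_inner, real_inner_comm (z s) (b l),
    real_inner_comm (a s) (z l), real_inner_comm (z s) (z l)]
  ring

lemma sum_comp_prodInnerDeriv
    (hE : ∀ a b c d : Evec n, ∑ α, E α a b * E α c d = ⟪a, c⟫ * ⟪b, d⟫ - ⟪a, d⟫ * ⟪b, c⟫) :
    ∑ α, comp (prodInnerDeriv (E α) : DF n p p) (prodInnerDeriv (E α)) =
      (p.factorial : ℝ)⁻¹ • ∑ s, ∑ l, slotPairTerm s l := by
  ext a b
  simp only [Finset.sum_apply, comp, Pi.smul_apply, smul_eq_mul, ← Finset.mul_sum]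
  rw [Finset.sum_comm]
  simp only [sum_prodInnerDeriv_mul_prodInnerDeriv hE]
  congr 1
  rw [Finset.sum_comm]
  refine Finset.sum_congr rfl fun s _ => ?_
  rw [Finset.sum_comm]
  refine Finset.sum_congr rfl fun l _ => ?_
  simp only [slotPairTerm, Finset.sum_sub_distrib, ← Finset.mul_sum]
  rw [Finset.sum_comm, sum_prodInner_ebasis]
  simp only [sum_prodInner_ebasis]

end CompletenessRelation

lemma slotPairTerm_self (s : Fin p) :
    slotPairTerm s s = (1 - n : ℝ) • (prodInner : DF n p p) := by
  ext a b
  simp only [slotPairTerm, prodInner_update_update_self, inner_ebasis_self, one_mul,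
    Finset.sum_const, card_univ, Fintype.card_fin, nsmul_eq_mul, Pi.smul_apply, smul_eq_mul]
  rw [prodInner, ← mul_prod_erase _ _ (mem_univ s), real_inner_comm (a s) (b s)]
  ring

lemma prod_erase_erase_comp_swap {s l : Fin p} (a b : Fin p → Evec n) :
    ∏ m ∈ (univ.erase s).erase l, ⟪a (swap s l m), b m⟫ =
      ∏ m ∈ (univ.erase s).erase l, ⟪a m, b m⟫ := by
  refine Finset.prod_congr rfl fun m hm => ?_
  obtain ⟨hml, hm⟩ := mem_erase.mp hm
  rw [swap_apply_of_ne_of_ne (ne_of_mem_erase hm) hml]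

lemma alternatize_slotPairTerm {s l : Fin p} (h : s ≠ l) :
    alternatize (slotPairTerm s l : DF n p p) =
      (p.factorial : ℝ) • alternatizeRight prodInner := by
  set T : DF n p p := fun a b => prodInner (update a s (b l)) (update b l (a s))
  have hT : (fun a b => T (a ∘ swap s l) b) = T := by
    ext a b
    simp only [T, prodInner_update_update h, prod_erase_erase_comp_swap, comp_apply,
      swap_apply_left, swap_apply_right, real_inner_comm (a s) (a l)]
  have hsplit : slotPairTerm s l = T - fun a b => prodInner (a ∘ swap s l) b := by
    ext a b
    simp only [slotPairTerm, T, Pi.sub_apply, prodInner_update_update h]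
    rw [prodInner, prod_eq_mul_mul_prod_erase_erase h]
    simp only [comp_apply, swap_apply_left, swap_apply_right, prod_erase_erase_comp_swap]
    rw [← Finset.sum_mul]
    simp only [mul_comm ⟪ebasis n _, b s⟫, sum_inner_ebasis_mul_inner]
    ring
  rw [hsplit, map_sub, alternatize_eq_zero_of_comp_swap h hT, alternatize_comp_left,
    sgn_swap h, isPermInvariant_prodInner.alternatize_eq, zero_sub, neg_one_smul, neg_neg]

lemma alternatize_slotPairTerm_eq (s l : Fin p) :
    alternatize (slotPairTerm s l : DF n p p) =
      ((p.factorial : ℝ) * (1 - if s = l then (n : ℝ) else 0)) • alternatizeRight prodInner := by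
  by_cases h : s = l
  · subst h
    rw [slotPairTerm_self, map_smul, isPermInvariant_prodInner.alternatize_eq, smul_smul,
      if_pos rfl, mul_comm]
  · rw [alternatize_slotPairTerm h, if_neg h, sub_zero, mul_one]

lemma alternatize_sum_slotPairTerm :
    alternatize (∑ s, ∑ l, slotPairTerm s l : DF n p p) =
      ((p.factorial : ℝ) * (p * (p - n))) • alternatizeRight prodInner := by
  simp only [map_sum, alternatize_slotPairTerm_eq, ← Finset.sum_smul]
  congr 1
  simp [mul_sub, Finset.sum_sub_distrib]
  ring

theorem sum_comp_gPowRho {ι : Type*} [Fintype ι] {E : ι → Evec n → Evec n → ℝ}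
    (hE : ∀ a b c d : Evec n, ∑ α, E α a b * E α c d = ⟪a, c⟫ * ⟪b, d⟫ - ⟪a, d⟫ * ⟪b, c⟫)
    (p : ℕ) :
    ∑ α, comp (gPowRho p (E α)) (gPowRho p (E α)) =
      ((p : ℝ) * (p - n)) • alternatizeRight prodInner := by
  simp only [gPowRho_eq, comp_alternatizeRight _ _ (isPermInvariant_prodInnerDeriv _)]
  rw [← map_sum, sum_comp_prodInnerDeriv hE, map_smul, alternatize_sum_slotPairTerm, smul_smul,
    ← mul_assoc, inv_mul_cancel₀ (by positivity), one_mul]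

end DoubleForm

theorem statement19_general (n p : ℕ) (hp : p ≤ n)
    (E : Fin (n * (n - 1) / 2) → (Evec n → Evec n → ℝ))
    (hE : ∀ α, IsAltBilin (E α))
    (hCompl : ∀ θ : Evec n → Evec n → ℝ, IsAltBilin θ →
      ∀ x y, θ x y = ∑ α, inner2 θ (E α) * E α x y) :
    -(∑ α, comp (gPowRho p (E α)) (gPowRho p (E α))) =
      ((p * (n - p) : ℕ) : ℝ) • (((p.factorial : ℝ))⁻¹ • gpow n p) := by
  rw [DoubleForm.sum_comp_gPowRho (DoubleForm.sum_mul_of_complete E hE hCompl),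
    DoubleForm.gpow_eq, smul_smul (p.factorial : ℝ)⁻¹, inv_mul_cancel₀ (by positivity), one_smul,
    ← neg_smul, Nat.cast_mul, Nat.cast_sub hp]
  congr 1
  ring

/-- For an orthonormal basis `(E_i)` of `Λ²V*` (`N = n(n−1)/2`):
`−∑_{i=1}^{N} (g^{p−1}ρ(E_i)/(p−1)!)∘(g^{p−1}ρ(E_i)/(p−1)!) = p(n−p) gᵖ/p!`. -/
theorem statement19 (n p : ℕ) (hp : p ≤ n)
    (E : Fin (n * (n - 1) / 2) → (Evec n → Evec n → ℝ))
    (hE : ∀ α, IsAltBilin (E α))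
    (hON : ∀ α β, inner2 (E α) (E β) = if α = β then 1 else 0)
    (hCompl : ∀ θ : Evec n → Evec n → ℝ, IsAltBilin θ →
      ∀ x y, θ x y = ∑ α, inner2 θ (E α) * E α x y) :
    -(∑ α, comp (gPowRho p (E α)) (gPowRho p (E α))) =
      ((p * (n - p) : ℕ) : ℝ) • (((p.factorial : ℝ))⁻¹ • gpow n p) :=
  statement19_general n p hp E hE hCompl
end
end
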